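/- Let (X,d) be a metric space with d₀ := dim_H(X) < ∞. Then H^{d₀} is absolutely continuous with respect to H_loc: every Borel set N with H_loc(N) = 0 satisfies H^{d₀}(N) = 0. -/

import Mathlib

/-!
Sets of diameter at most `1` satisfy `diam U ^ d₀ ≤ diam U ^ dim_H U`, because
`dim_H U ≤ dim_H X = d₀`. The Carathéodory construction only sees arbitrarily small sets, so
this pointwise comparison of gauges gives `H^{d₀} ≤ H_loc` as measures.
-/

open MeasureTheory Metric
open scoped ENNReal

/-- The local Hausdorff measure: Carathéodory construction with
`τ(U) = diam(U)^{dim_H U}`. -/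
noncomputable def locHausdorffMeasure (X : Type*) [MetricSpace X] [MeasurableSpace X]
    [BorelSpace X] : Measure X :=
  Measure.mkMetric' (fun U => EMetric.diam U ^ (dimH U).toReal)

namespace MeasureTheory

variable {X : Type*} [EMetricSpace X]

theorem OuterMeasure.mkMetric'_mono {m₁ m₂ : Set X → ℝ≥0∞} {ε : ℝ≥0∞} (hε : 0 < ε)
    (hle : ∀ s, ediam s ≤ ε → m₁ s ≤ m₂ s) :
    OuterMeasure.mkMetric' m₁ ≤ OuterMeasure.mkMetric' m₂ := by
  refine iSup₂_le fun r hr => ?_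
  refine (mkMetric'.mono_pre _ (min_le_left r ε)).trans ?_
  refine le_iSup₂_of_le (min r ε) (lt_min hr hε) ?_
  refine mkMetric'.le_pre.2 fun s hs => (mkMetric'.pre_le hs).trans ?_
  exact hle s (hs.trans (min_le_right r ε))

theorem Measure.mkMetric'_mono [MeasurableSpace X] [BorelSpace X] {m₁ m₂ : Set X → ℝ≥0∞}
    {ε : ℝ≥0∞} (hε : 0 < ε) (hle : ∀ s, ediam s ≤ ε → m₁ s ≤ m₂ s) :
    Measure.mkMetric' m₁ ≤ Measure.mkMetric' m₂ := by
  refine Measure.le_iff.2 fun s hs => ?_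
  simp only [Measure.mkMetric', toMeasure_apply _ _ hs]
  exact OuterMeasure.mkMetric'_mono hε hle s

end MeasureTheory

theorem hausdorffMeasure_le_locHausdorffMeasure {X : Type*} [MetricSpace X] [MeasurableSpace X]
    [BorelSpace X] (hfin : dimH (Set.univ : Set X) ≠ ⊤) :
    μH[(dimH (Set.univ : Set X)).toReal] ≤ locHausdorffMeasure X :=
  Measure.mkMetric'_mono zero_lt_one fun s hs =>
    ENNReal.rpow_le_rpow_of_exponent_ge hs
      (ENNReal.toReal_mono hfin (dimH_mono (Set.subset_univ s)))

theorem statement4_general {X : Type*} [MetricSpace X] [MeasurableSpace X] [BorelSpace X]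
    (hfin : dimH (Set.univ : Set X) ≠ ⊤)
    (N : Set X) (h0 : locHausdorffMeasure X N = 0) :
    μH[(dimH (Set.univ : Set X)).toReal] N = 0 :=
  Measure.absolutelyContinuous_of_le (hausdorffMeasure_le_locHausdorffMeasure hfin) h0

theorem statement4 {X : Type*} [MetricSpace X] [MeasurableSpace X] [BorelSpace X]
    (hfin : dimH (Set.univ : Set X) ≠ ⊤)
    (N : Set X) (hN : MeasurableSet N) (h0 : locHausdorffMeasure X N = 0) :
    μH[(dimH (Set.univ : Set X)).toReal] N = 0 :=
  statement4_general hfin N h0
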